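/- arXiv:1712.01934 — 3 statements merged into one kernel-verified Lean document; each statement's English description precedes it below -/
import Mathlib

section
/- Let T be a positive self-adjoint trace-class operator on a separable Hilbert space with eigenvalues ζ₁ ≥ ζ₂ ≥ … satisfying ζ_j ≤ β·j^{−b} for all j ≥ 1, where b > 1 and β > 0. Then for every λ ∈ (0,1], the effective dimension N(λ) := Tr((T+λ)⁻¹T) = ∑_j ζ_j/(ζ_j + λ) satisfies N(λ) ≤ C(b,β)·λ^{−1/b} for some constant C(b,β) depending only on b and β. -/
/-!
Cut the series at `N = ⌈(β/λ)^{1/b}⌉`. Every term `ζ_j/(ζ_j+λ)` is at most `1`, so the first `N`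
terms contribute at most `N`. Past `N` the terms are at most `(β/λ)(j+1)^{-b}`, and this tail is
compared with `∫_N^∞ t^{-b} dt = N^{1-b}/(b-1)` through the telescoping bound
`(b-1)(x+1)^{-b} ≤ x^{1-b} - (x+1)^{1-b}`; since `β/λ ≤ N^b` it is at most `N/(b-1)`.
Finally `N ≤ (β/λ)^{1/b} + 1 ≤ (β^{1/b} + 1) λ^{-1/b}` for `λ ≤ 1`.
-/

open Finset

namespace EffectiveDimension

variable {b : ℝ}

lemma mul_add_one_rpow_neg_le_sub (hb : 1 < b) {x : ℝ} (hx : 0 < x) :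
    (b - 1) * (x + 1) ^ (-b) ≤ x ^ (1 - b) - (x + 1) ^ (1 - b) := by
  have hx1 : 0 < x + 1 := by linarith
  -- Bernoulli's inequality `(1 + 1/x)^b ≥ 1 + b/x`, multiplied through by `x`
  have hbern : x + b ≤ x ^ (1 - b) * (x + 1) ^ b := by
    have h := one_add_mul_self_le_rpow_one_add (by have := inv_pos.2 hx; linarith : -1 ≤ x⁻¹) hb.le
    have hsplit : x ^ (1 - b) * (x + 1) ^ b = x * (1 + x⁻¹) ^ b := by
      rw [show 1 + x⁻¹ = (x + 1) / x by field_simp, Real.div_rpow hx1.le hx.le,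
        Real.rpow_sub hx, Real.rpow_one]
      ring
    calc x + b = x * (1 + b * x⁻¹) := by field_simp
      _ ≤ x * (1 + x⁻¹) ^ b := by gcongr
      _ = x ^ (1 - b) * (x + 1) ^ b := hsplit.symm
  have hinv : (x + 1) ^ b * (x + 1) ^ (-b) = 1 := by
    rw [Real.rpow_neg hx1.le, mul_inv_cancel₀ (Real.rpow_pos_of_pos hx1 b).ne']
  have hsub : (x + 1) ^ (1 - b) = (x + 1) * (x + 1) ^ (-b) := by
    rw [sub_eq_add_neg, Real.rpow_add hx1, Real.rpow_one]
  have hu : 0 < (x + 1) ^ (-b) := Real.rpow_pos_of_pos hx1 _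
  have h := mul_le_mul_of_nonneg_right hbern hu.le
  rw [mul_assoc, hinv, mul_one] at h
  rw [hsub]
  linarith

lemma mul_sum_range_rpow_neg_le (hb : 1 < b) {x : ℝ} (hx : 0 < x) (n : ℕ) :
    (b - 1) * ∑ j ∈ range n, (x + j + 1) ^ (-b) ≤ x ^ (1 - b) - (x + n) ^ (1 - b) := by
  induction n with
  | zero => simp
  | succ n ih =>
    have hstep := mul_add_one_rpow_neg_le_sub hb (by positivity : 0 < x + n)
    rw [sum_range_succ, mul_add, Nat.cast_succ, ← add_assoc]
    linarith

lemma summable_nat_add_one_rpow_neg (hb : 1 < b) :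
    Summable fun j : ℕ => ((j : ℝ) + 1) ^ (-b) := by
  have h := (summable_nat_add_iff 1).mpr (Real.summable_nat_rpow.mpr (by linarith : -b < -1))
  simpa only [Nat.cast_add, Nat.cast_one] using h

lemma tsum_nat_add_le_of_le_mul_rpow (hb : 1 < b) {c : ℝ} (hc : 0 ≤ c) {f : ℕ → ℝ}
    (hf0 : ∀ j, 0 ≤ f j) (hfc : ∀ j, f j ≤ c * ((j : ℝ) + 1) ^ (-b)) {N : ℕ} (hN : 0 < N)
    (hcN : c ≤ (N : ℝ) ^ b) :
    ∑' j, f (j + N) ≤ N / (b - 1) := by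
  have hb1 : 0 < b - 1 := by linarith
  have hN0 : (0 : ℝ) < N := Nat.cast_pos.2 hN
  have hpow : c * (N : ℝ) ^ (1 - b) ≤ N := by
    rw [Real.rpow_sub hN0, Real.rpow_one, mul_div_assoc', div_le_iff₀ (by positivity), mul_comm]
    exact mul_le_mul_of_nonneg_left hcN hN0.le
  refine Real.tsum_le_of_sum_range_le (fun j => hf0 _) fun n => ?_
  have htel := mul_sum_range_rpow_neg_le hb hN0 n
  have hrem : 0 ≤ ((N : ℝ) + n) ^ (1 - b) := by positivity
  calc ∑ j ∈ range n, f (j + N) ≤ c * ∑ j ∈ range n, ((N : ℝ) + j + 1) ^ (-b) := by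
        rw [mul_sum]
        refine sum_le_sum fun j _ => (hfc _).trans_eq ?_
        push_cast
        ring_nf
    _ ≤ c * ((N : ℝ) ^ (1 - b) / (b - 1)) := by
        gcongr
        rw [le_div_iff₀ hb1]
        linarith
    _ ≤ N / (b - 1) := by
        rw [mul_div_assoc']
        gcongr

theorem tsum_le_of_le_one_of_le_mul_rpow (hb : 1 < b) {c : ℝ} (hc : 0 < c) {f : ℕ → ℝ}
    (hf0 : ∀ j, 0 ≤ f j) (hf1 : ∀ j, f j ≤ 1) (hfc : ∀ j, f j ≤ c * ((j : ℝ) + 1) ^ (-b)) :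
    ∑' j, f j ≤ b / (b - 1) * (c ^ (1 / b) + 1) := by
  have hb0 : 0 < b := by linarith
  have hb1 : 0 < b - 1 := by linarith
  have hf : Summable f :=
    .of_nonneg_of_le hf0 hfc ((summable_nat_add_one_rpow_neg hb).mul_left c)
  set N : ℕ := ⌈c ^ (1 / b)⌉₊
  have hN : 0 < N := Nat.ceil_pos.2 (by positivity)
  have hcN : c ≤ (N : ℝ) ^ b := by
    calc c = (c ^ (1 / b)) ^ b := by
          rw [← Real.rpow_mul hc.le, one_div_mul_cancel hb0.ne', Real.rpow_one]
      _ ≤ (N : ℝ) ^ b := by gcongr; exact Nat.le_ceil _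
  have hhead : ∑ j ∈ range N, f j ≤ N := by
    simpa using sum_le_sum fun j (_ : j ∈ range N) => hf1 j
  have htail := tsum_nat_add_le_of_le_mul_rpow hb hc.le hf0 hfc hN hcN
  calc ∑' j, f j = ∑ j ∈ range N, f j + ∑' j, f (j + N) := (hf.sum_add_tsum_nat_add N).symm
    _ ≤ N + N / (b - 1) := add_le_add hhead htail
    _ = b / (b - 1) * N := by field_simp; ring
    _ ≤ b / (b - 1) * (c ^ (1 / b) + 1) := by
        gcongr
        exact (Nat.ceil_lt_add_one (by positivity)).le

end EffectiveDimension

open EffectiveDimension in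
/-- Effective dimension bound: if the (nonincreasing, nonnegative) eigenvalues
`ζ` of a positive trace-class operator satisfy `ζ_j ≤ β j^{-b}` (here indexed
from `0`, so `ζ j ≤ β (j+1)^{-b}`), then
`N(λ) = ∑_j ζ_j/(ζ_j+λ) ≤ C(b,β) λ^{-1/b}` for all `λ ∈ (0,1]`. -/
theorem effective_dimension_bound (b β : ℝ) (hb : 1 < b) (hβ : 0 < β) :
    ∃ C : ℝ, 0 < C ∧ ∀ ζ : ℕ → ℝ, (∀ j, 0 ≤ ζ j) → Antitone ζ →
      (∀ j : ℕ, ζ j ≤ β * ((j : ℝ) + 1) ^ (-b)) →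
      ∀ lam : ℝ, 0 < lam → lam ≤ 1 →
        (∑' j : ℕ, ζ j / (ζ j + lam)) ≤ C * lam ^ (-(1 / b)) := by
  refine ⟨b / (b - 1) * (β ^ (1 / b) + 1), by positivity, ?_⟩
  intro ζ hζ0 _ hζβ lam hlam hlam1
  have hdim := tsum_le_of_le_one_of_le_mul_rpow hb (div_pos hβ hlam)
    (f := fun j => ζ j / (ζ j + lam)) (fun j => by have := hζ0 j; positivity)
    (fun j => (div_le_one (by linarith [hζ0 j])).2 (by linarith))
    (fun j => by
      calc ζ j / (ζ j + lam) ≤ ζ j / lam :=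
          div_le_div_of_nonneg_left (hζ0 j) hlam (by linarith [hζ0 j])
        _ ≤ β / lam * ((j : ℝ) + 1) ^ (-b) := by rw [div_mul_eq_mul_div]; gcongr; exact hζβ j)
  have hlam_inv : 1 ≤ lam ^ (-(1 / b)) :=
    Real.one_le_rpow_of_pos_of_le_one_of_nonpos hlam hlam1 (neg_nonpos.2 (by positivity))
  calc ∑' j, ζ j / (ζ j + lam)
      ≤ b / (b - 1) * ((β / lam) ^ (1 / b) + 1) := hdim
    _ = b / (b - 1) * (β ^ (1 / b) * lam ^ (-(1 / b)) + 1) := by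
        rw [Real.div_rpow hβ.le hlam.le, Real.rpow_neg hlam.le, ← div_eq_mul_inv]
    _ ≤ b / (b - 1) * (β ^ (1 / b) * lam ^ (-(1 / b)) + lam ^ (-(1 / b))) := by gcongr
    _ = b / (b - 1) * (β ^ (1 / b) + 1) * lam ^ (-(1 / b)) := by ring
end

section
/- Let X ~ random vector in a Banach space with ‖X‖ ≤ c almost surely and E[‖X‖²] ≤ σ². Suppose the norm satisfies: for all nonzero s and all v, the second directional derivative of the norm satisfies |δ_{v,v}(‖s‖)| ≤ A₂‖v‖²/‖s‖ and first directional derivatives are bounded by A₁‖v‖ (A₁ ≥ 1). Then for λ ≥ 0, E[cosh(λ‖X‖)] ≤ 1 + (σ²/c²)·B·π(λc), where B = A₁² + A₂ and π(x) = e^x − x − 1. -/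
/-!
Along a ray the norm is linear, so the bound reduces to a scalar inequality: with
`π y = exp y - y - 1`, for `0 ≤ x ≤ c` one has `cosh (λ x) - 1 ≤ π (λ x) ≤ (x / c)² π (λ c)`.
The first step is `z ≤ sinh z`; the second compares the series `π y = ∑ yⁿ⁺² / (n + 2)!`
termwise. Taking expectations, `E ‖X‖² ≤ σ²` and `1 ≤ A₁² + A₂` finish the proof.
-/

open MeasureTheory

namespace Real

theorem hasSum_exp_sub_sub_one (z : ℝ) :
    HasSum (fun n : ℕ => z ^ (n + 2) / (n + 2).factorial) (exp z - z - 1) := by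
  have h := (hasSum_nat_add_iff' 2).2 (NormedSpace.expSeries_div_hasSum_exp z)
  rw [← exp_eq_exp_ℝ] at h
  simpa [Finset.sum_range_succ, sub_add_eq_sub_sub_swap] using h

theorem exp_mul_sub_mul_sub_one_le {t y : ℝ} (ht₀ : 0 ≤ t) (ht₁ : t ≤ 1) (hy : 0 ≤ y) :
    exp (t * y) - t * y - 1 ≤ t ^ 2 * (exp y - y - 1) := by
  refine hasSum_le (fun n => ?_) (hasSum_exp_sub_sub_one (t * y))
    ((hasSum_exp_sub_sub_one y).mul_left (t ^ 2))
  rw [mul_pow, mul_div_assoc]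
  gcongr ?_ * _
  exact pow_le_pow_of_le_one ht₀ ht₁ (Nat.le_add_left 2 n)

theorem cosh_le_exp_sub_self {z : ℝ} (hz : 0 ≤ z) : cosh z ≤ exp z - z := by
  linarith [cosh_add_sinh z, self_le_sinh_iff.2 hz]

theorem cosh_mul_le_one_add_sq_div_sq_mul {c lam x : ℝ} (hc : 0 < c) (hlam : 0 ≤ lam)
    (hx₀ : 0 ≤ x) (hxc : x ≤ c) :
    cosh (lam * x) ≤ 1 + x ^ 2 / c ^ 2 * (exp (lam * c) - lam * c - 1) := by
  have hscale : x / c * (lam * c) = lam * x := by field_simp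
  have h := exp_mul_sub_mul_sub_one_le (div_nonneg hx₀ hc.le) ((div_le_one hc).2 hxc)
    (mul_nonneg hlam hc.le)
  rw [hscale, div_pow] at h
  linarith [cosh_le_exp_sub_self (mul_nonneg hlam hx₀)]

end Real

theorem expectation_cosh_norm_le_general {Ω : Type*} [MeasurableSpace Ω]
    (μ : Measure Ω) [IsProbabilityMeasure μ]
    {B : Type*} [NormedAddCommGroup B] [NormedSpace ℝ B]
    (X : Ω → B) (hX : AEStronglyMeasurable X μ)
    (c σ A₁ A₂ lam : ℝ) (hc : 0 < c) (hA₁ : 1 ≤ A₁) (hA₂ : 0 < A₂) (hlam : 0 ≤ lam)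
    (hbd : ∀ᵐ ω ∂μ, ‖X ω‖ ≤ c)
    (hvar : ∫ ω, ‖X ω‖ ^ 2 ∂μ ≤ σ ^ 2) :
    ∫ ω, Real.cosh (lam * ‖X ω‖) ∂μ ≤
      1 + σ ^ 2 / c ^ 2 * (A₁ ^ 2 + A₂) * (Real.exp (lam * c) - lam * c - 1) := by
  set π := Real.exp (lam * c) - lam * c - 1
  have hπ : 0 ≤ π := by linarith [Real.add_one_le_exp (lam * c)]
  have hsq : Integrable (fun ω => ‖X ω‖ ^ 2) μ := by
    refine .of_bound (hX.norm.pow 2) (c ^ 2) ?_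
    filter_upwards [hbd] with ω hω
    rw [Real.norm_of_nonneg (by positivity)]
    gcongr
  have hB : 1 ≤ A₁ ^ 2 + A₂ := by nlinarith
  calc ∫ ω, Real.cosh (lam * ‖X ω‖) ∂μ
      ≤ ∫ ω, (1 + ‖X ω‖ ^ 2 / c ^ 2 * π) ∂μ := by
        refine integral_mono_of_nonneg (.of_forall fun ω => (Real.cosh_pos _).le)
          ((integrable_const 1).add ((hsq.div_const _).mul_const π)) ?_
        filter_upwards [hbd] with ω hω
        exact Real.cosh_mul_le_one_add_sq_div_sq_mul hc hlam (norm_nonneg _) hω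
    _ = 1 + (∫ ω, ‖X ω‖ ^ 2 ∂μ) / c ^ 2 * π := by
        rw [integral_add (integrable_const 1) ((hsq.div_const _).mul_const π), integral_mul_const,
          integral_div, integral_const, probReal_univ, one_smul]
    _ ≤ 1 + σ ^ 2 / c ^ 2 * 1 * π := by rw [mul_one]; gcongr
    _ ≤ 1 + σ ^ 2 / c ^ 2 * (A₁ ^ 2 + A₂) * π := by
        gcongr

theorem expectation_cosh_norm_le {Ω : Type*} [MeasurableSpace Ω]
    (μ : Measure Ω) [IsProbabilityMeasure μ]
    {B : Type*} [NormedAddCommGroup B] [NormedSpace ℝ B]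
    (X : Ω → B) (hX : AEStronglyMeasurable X μ)
    (c σ A₁ A₂ lam : ℝ) (hc : 0 < c) (hA₁ : 1 ≤ A₁) (hA₂ : 0 < A₂) (hlam : 0 ≤ lam)
    (hbd : ∀ᵐ ω ∂μ, ‖X ω‖ ≤ c)
    (hvar : ∫ ω, ‖X ω‖ ^ 2 ∂μ ≤ σ ^ 2)
    (hD1 : ∀ s v : B, s ≠ 0 → |deriv (fun t : ℝ => ‖s + t • v‖) 0| ≤ A₁ * ‖v‖)
    (hD2 : ∀ s v : B, s ≠ 0 →
      |deriv (deriv (fun t : ℝ => ‖s + t • v‖)) 0| ≤ A₂ * ‖v‖ ^ 2 / ‖s‖) :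
    ∫ ω, Real.cosh (lam * ‖X ω‖) ∂μ ≤
      1 + σ ^ 2 / c ^ 2 * (A₁ ^ 2 + A₂) * (Real.exp (lam * c) - lam * c - 1) :=
  expectation_cosh_norm_le_general μ X hX c σ A₁ A₂ lam hc hA₁ hA₂ hlam hbd hvar
end

section
/- Let n ≥ 1 and let θ > 0, γ > 0, χ > 0, c > 0, C₁ > 0 be constants. Define ℓ_g = ⌊ nθ / (2·(1 ∨ log(nθχC₁/c))^{1/γ}) ⌋ and suppose ℓ_g ≥ 1. Then ℓ_g · C₁ · χ · exp(−(θ·(n/(2ℓ_g)))^γ) ≤ c. -/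
open Real

/-- With `L = 1 ∨ log (m K / c)`, a block length `ℓ ≤ m / (2 L^{1/γ})` makes `(m / 2ℓ)^γ ≥ log (m K / c)`,
so the mixing term is at most `c / (m K)`, while `L ≥ 1` gives `ℓ ≤ m / 2`. -/
theorem mul_mul_exp_neg_div_rpow_le_half {m K c γ ℓ : ℝ} (hK : 0 < K) (hc : 0 < c) (hγ : 0 < γ)
    (hℓ : 0 < ℓ) (hℓm : ℓ ≤ m / (2 * max 1 (log (m * K / c)) ^ (1 / γ))) :
    ℓ * K * exp (-(m / (2 * ℓ)) ^ γ) ≤ c / 2 := by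
  set L := max 1 (log (m * K / c))
  have hL : 1 ≤ L := le_max_left _ _
  have hroot : 1 ≤ L ^ (1 / γ) := one_le_rpow hL (by positivity)
  have hm : 0 < m := by
    have := hℓ.trans_le hℓm
    rwa [div_pos_iff_of_pos_right (by positivity)] at this
  have hℓ_half : ℓ ≤ m / 2 :=
    hℓm.trans (div_le_div_of_nonneg_left hm.le two_pos (by linarith))
  have hroot_le : L ^ γ⁻¹ ≤ m / (2 * ℓ) := by
    rw [le_div_iff₀ (by positivity), ← one_div]
    rw [le_div_iff₀ (by positivity)] at hℓm
    linarith
  have hlog : log (m * K / c) ≤ (m / (2 * ℓ)) ^ γ :=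
    (le_max_right _ _).trans <|
      (rpow_inv_le_iff_of_pos (by positivity) (by positivity) hγ).mp hroot_le
  have hexp : exp (-(m / (2 * ℓ)) ^ γ) ≤ c / (m * K) := by
    calc exp (-(m / (2 * ℓ)) ^ γ) ≤ exp (-log (m * K / c)) := exp_le_exp.mpr (neg_le_neg hlog)
      _ = c / (m * K) := by rw [exp_neg, exp_log (by positivity), inv_div]
  calc ℓ * K * exp (-(m / (2 * ℓ)) ^ γ) ≤ m / 2 * K * (c / (m * K)) := by gcongr
    _ = c / 2 := by field_simp

theorem geometric_mixing_effective_sample_size_general (n : ℕ)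
    (θ γ χ c C₁ : ℝ) (hθ : 0 < θ) (hγ : 0 < γ) (hχ : 0 < χ) (hc : 0 < c)
    (hC₁ : 0 < C₁)
    (ℓg : ℕ)
    (hℓg : ℓg = ⌊(n : ℝ) * θ /
      (2 * (max 1 (Real.log ((n : ℝ) * θ * χ * C₁ / c))) ^ (1 / γ))⌋₊)
    (hℓg1 : 1 ≤ ℓg) :
    (ℓg : ℝ) * C₁ * χ * Real.exp (-(θ * ((n : ℝ) / (2 * (ℓg : ℝ)))) ^ γ) ≤ c := by
  have hℓ : (0 : ℝ) < ℓg := by exact_mod_cast hℓg1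
  have hfloor : (ℓg : ℝ) ≤ n * θ / (2 * max 1 (log (n * θ * (χ * C₁) / c)) ^ (1 / γ)) := by
    rw [hℓg, ← mul_assoc]
    exact Nat.floor_le (by positivity)
  calc (ℓg : ℝ) * C₁ * χ * exp (-(θ * (n / (2 * ℓg))) ^ γ)
      = ℓg * (χ * C₁) * exp (-(n * θ / (2 * ℓg)) ^ γ) := by rw [mul_div_assoc', mul_comm θ]; ring
    _ ≤ c / 2 := mul_mul_exp_neg_div_rpow_le_half (by positivity) hc hγ hℓ hfloor
    _ ≤ c := by linarith

theorem geometric_mixing_effective_sample_size (n : ℕ) (hn : 1 ≤ n)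
    (θ γ χ c C₁ : ℝ) (hθ : 0 < θ) (hγ : 0 < γ) (hχ : 0 < χ) (hc : 0 < c)
    (hC₁ : 0 < C₁)
    (ℓg : ℕ)
    (hℓg : ℓg = ⌊(n : ℝ) * θ /
      (2 * (max 1 (Real.log ((n : ℝ) * θ * χ * C₁ / c))) ^ (1 / γ))⌋₊)
    (hℓg1 : 1 ≤ ℓg) :
    (ℓg : ℝ) * C₁ * χ * Real.exp (-(θ * ((n : ℝ) / (2 * (ℓg : ℝ)))) ^ γ) ≤ c :=
  geometric_mixing_effective_sample_size_general n θ γ χ c C₁ hθ hγ hχ hc hC₁ ℓg hℓg hℓg1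
end
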